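/- Deformation invariance of the modular commutator under enlarging the middle region: let σ be a positive definite density matrix on H_A ⊗ H_B ⊗ H_b ⊗ H_C satisfying the two quantum Markov identities K_{ABb}(σ) = K_{AB}(σ) + K_{Bb}(σ) − K_B(σ) and K_{BbC}(σ) = K_{BC}(σ) + K_{Bb}(σ) − K_B(σ) (with implicit identity extensions). Then J(A, Bb, C)_σ = J(A, B, C)_σ, where in J(A,Bb,C) the middle subsystem is the union of the factors B and b. -/
import Mathlib


open scoped ComplexOrder

noncomputable section

namespace ModularCommutator

/-- Matrix logarithm of a Hermitian matrix, defined through the spectral theorem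
(junk value `0` on non-Hermitian matrices). -/
noncomputable def mlog {n : Type} [Fintype n] [DecidableEq n] (M : Matrix n n ℂ) :
    Matrix n n ℂ :=
  if h : M.IsHermitian then
    (h.eigenvectorUnitary : Matrix n n ℂ) *
      Matrix.diagonal (fun i => (Real.log (h.eigenvalues i) : ℂ)) *
      (star (h.eigenvectorUnitary : Matrix n n ℂ))
  else 0

/- The Hilbert space is `H_A ⊗ H_B ⊗ H_b ⊗ H_C`, with configurations
`(x.1, x.2.1, x.2.2.1, x.2.2.2) : A × B × b × C`. -/
variable {A B b C : Type} [Fintype A] [DecidableEq A] [Fintype B] [DecidableEq B]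
  [Fintype b] [DecidableEq b] [Fintype C] [DecidableEq C]

/-- Partial trace onto `A ⊗ B ⊗ b`. -/
def ptABb (σ : Matrix (A × B × b × C) (A × B × b × C) ℂ) :
    Matrix (A × B × b) (A × B × b) ℂ :=
  fun p q => ∑ c : C, σ (p.1, p.2.1, p.2.2, c) (q.1, q.2.1, q.2.2, c)

/-- Partial trace onto `A ⊗ B`. -/
def ptAB (σ : Matrix (A × B × b × C) (A × B × b × C) ℂ) : Matrix (A × B) (A × B) ℂ :=
  fun p q => ∑ t : b, ∑ c : C, σ (p.1, p.2, t, c) (q.1, q.2, t, c)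

/-- Partial trace onto `B ⊗ b`. -/
def ptBb (σ : Matrix (A × B × b × C) (A × B × b × C) ℂ) : Matrix (B × b) (B × b) ℂ :=
  fun p q => ∑ x : A, ∑ c : C, σ (x, p.1, p.2, c) (x, q.1, q.2, c)

/-- Partial trace onto `B`. -/
def ptB (σ : Matrix (A × B × b × C) (A × B × b × C) ℂ) : Matrix B B ℂ :=
  fun y y' => ∑ x : A, ∑ t : b, ∑ c : C, σ (x, y, t, c) (x, y', t, c)

/-- Partial trace onto `B ⊗ b ⊗ C`. -/
def ptBbC (σ : Matrix (A × B × b × C) (A × B × b × C) ℂ) :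
    Matrix (B × b × C) (B × b × C) ℂ :=
  fun p q => ∑ x : A, σ (x, p.1, p.2.1, p.2.2) (x, q.1, q.2.1, q.2.2)

/-- Partial trace onto `B ⊗ C`. -/
def ptBC (σ : Matrix (A × B × b × C) (A × B × b × C) ℂ) : Matrix (B × C) (B × C) ℂ :=
  fun p q => ∑ x : A, ∑ t : b, σ (x, p.1, t, p.2) (x, q.1, t, q.2)

/-- Extension of an operator on `A ⊗ B ⊗ b` by the identity on `C`. -/
def embABb (M : Matrix (A × B × b) (A × B × b) ℂ) :
    Matrix (A × B × b × C) (A × B × b × C) ℂ :=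
  fun x y => if x.2.2.2 = y.2.2.2 then
    M (x.1, x.2.1, x.2.2.1) (y.1, y.2.1, y.2.2.1) else 0

/-- Extension of an operator on `A ⊗ B` by the identity on `b ⊗ C`. -/
def embAB (M : Matrix (A × B) (A × B) ℂ) :
    Matrix (A × B × b × C) (A × B × b × C) ℂ :=
  fun x y => if x.2.2 = y.2.2 then M (x.1, x.2.1) (y.1, y.2.1) else 0

/-- Extension of an operator on `B ⊗ b` by the identity on `A ⊗ C`. -/
def embBb (M : Matrix (B × b) (B × b) ℂ) :
    Matrix (A × B × b × C) (A × B × b × C) ℂ :=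
  fun x y => if x.1 = y.1 ∧ x.2.2.2 = y.2.2.2 then
    M (x.2.1, x.2.2.1) (y.2.1, y.2.2.1) else 0

/-- Extension of an operator on `B` by the identity on `A ⊗ b ⊗ C`. -/
def embB (M : Matrix B B ℂ) : Matrix (A × B × b × C) (A × B × b × C) ℂ :=
  fun x y => if x.1 = y.1 ∧ x.2.2 = y.2.2 then M x.2.1 y.2.1 else 0

/-- Extension of an operator on `B ⊗ b ⊗ C` by the identity on `A`. -/
def embBbC (M : Matrix (B × b × C) (B × b × C) ℂ) :
    Matrix (A × B × b × C) (A × B × b × C) ℂ :=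
  fun x y => if x.1 = y.1 then M x.2 y.2 else 0

/-- Extension of an operator on `B ⊗ C` by the identity on `A ⊗ b`. -/
def embBC (M : Matrix (B × C) (B × C) ℂ) :
    Matrix (A × B × b × C) (A × B × b × C) ℂ :=
  fun x y => if x.1 = y.1 ∧ x.2.2.1 = y.2.2.1 then
    M (x.2.1, x.2.2.2) (y.2.1, y.2.2.2) else 0


section Aux
set_option linter.unusedSectionVars false

theorem comm_aux {n : Type} [Fintype n] [DecidableEq n] (U D L : Matrix n n ℂ)
    (hU : star U * U = 1) (hDL : D * L = L * D) :
    (U * D * star U) * (U * L * star U) = (U * L * star U) * (U * D * star U) := by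
  calc (U * D * star U) * (U * L * star U) = U * (D * (star U * U) * L) * star U := by
        simp only [Matrix.mul_assoc]
    _ = U * (L * (star U * U) * D) * star U := by rw [hU, Matrix.mul_one, Matrix.mul_one, hDL]
    _ = (U * L * star U) * (U * D * star U) := by simp only [Matrix.mul_assoc]

theorem mlog_comm {n : Type} [Fintype n] [DecidableEq n] (M : Matrix n n ℂ)
    (h : M.IsHermitian) : M * mlog M = mlog M * M := by
  have hU : star (h.eigenvectorUnitary : Matrix n n ℂ) * (h.eigenvectorUnitary : Matrix n n ℂ)
      = 1 := (Matrix.mem_unitaryGroup_iff').mp h.eigenvectorUnitary.2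
  have hM := h.spectral_theorem
  rw [mlog, dif_pos h]
  set U := (h.eigenvectorUnitary : Matrix n n ℂ)
  set D := (Matrix.diagonal (RCLike.ofReal ∘ h.eigenvalues) : Matrix n n ℂ)
  set L := (Matrix.diagonal (fun i => (Real.log (h.eigenvalues i) : ℂ)) : Matrix n n ℂ)
  rw [hM]
  exact comm_aux U D L hU
    (by rw [Matrix.diagonal_mul_diagonal, Matrix.diagonal_mul_diagonal]
        exact congrArg _ (funext fun i => mul_comm _ _))

theorem trace_comm_zero {n : Type} [Fintype n] [DecidableEq n] (ρ K E : Matrix n n ℂ)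
    (hc : ρ * K = K * ρ) : (ρ * (E * K - K * E)).trace = 0 := by
  rw [Matrix.mul_sub, Matrix.trace_sub, ← Matrix.mul_assoc, ← Matrix.mul_assoc]
  rw [Matrix.trace_mul_cycle ρ E K, ← hc, Matrix.mul_assoc, ← Matrix.mul_assoc]
  exact sub_self _

theorem trace_comm_zero' {n : Type} [Fintype n] [DecidableEq n] (ρ K E : Matrix n n ℂ)
    (hc : ρ * K = K * ρ) : (ρ * (K * E - E * K)).trace = 0 := by
  rw [← neg_sub, Matrix.mul_neg, Matrix.trace_neg, trace_comm_zero ρ K E hc, neg_zero]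

theorem embABb_sub (M N : Matrix (A × B × b) (A × B × b) ℂ) :
    embABb (M - N) = (embABb M : Matrix (A × B × b × C) (A × B × b × C) ℂ) - embABb N := by
  funext x y
  simp only [embABb, Matrix.sub_apply]
  by_cases h : x.2.2.2 = y.2.2.2 <;> simp [h]

theorem embBbC_sub (M N : Matrix (B × b × C) (B × b × C) ℂ) :
    embBbC (M - N) = (embBbC M : Matrix (A × B × b × C) (A × B × b × C) ℂ) - embBbC N := by
  funext x y
  simp only [embBbC, Matrix.sub_apply]
  by_cases h : x.1 = y.1 <;> simp [h]

/-- Embedding of an operator on `A ⊗ B` into `A ⊗ B ⊗ b` by identity on `b`. -/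
def embbMid (M : Matrix (A × B) (A × B) ℂ) : Matrix (A × B × b) (A × B × b) ℂ :=
  fun p q => if p.2.2 = q.2.2 then M (p.1, p.2.1) (q.1, q.2.1) else 0

/-- Embedding of an operator on `B ⊗ C` into `B ⊗ b ⊗ C` by identity on `b`. -/
def embbMid' (M : Matrix (B × C) (B × C) ℂ) : Matrix (B × b × C) (B × b × C) ℂ :=
  fun p q => if p.2.1 = q.2.1 then M (p.1, p.2.2) (q.1, q.2.2) else 0

theorem embAB_eq (M : Matrix (A × B) (A × B) ℂ) :
    (embAB M : Matrix (A × B × b × C) (A × B × b × C) ℂ) = embABb (embbMid M) := by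
  funext x y
  simp only [embAB, embABb, embbMid, Prod.ext_iff]
  by_cases h1 : x.2.2.1 = y.2.2.1 <;> by_cases h2 : x.2.2.2 = y.2.2.2 <;> simp [h1, h2]

theorem embBC_eq (M : Matrix (B × C) (B × C) ℂ) :
    (embBC M : Matrix (A × B × b × C) (A × B × b × C) ℂ) = embBbC (embbMid' M) := by
  funext x y
  simp only [embBC, embBbC, embbMid']
  by_cases h1 : x.1 = y.1 <;> by_cases h2 : x.2.2.1 = y.2.2.1 <;> simp [h1, h2]

theorem embABb_mul (M N : Matrix (A × B × b) (A × B × b) ℂ) :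
    embABb (M * N) = (embABb M : Matrix (A × B × b × C) (A × B × b × C) ℂ) * embABb N := by
  funext x y
  simp only [embABb, Matrix.mul_apply, Fintype.sum_prod_type, ite_mul, mul_ite, zero_mul,
    mul_zero, Finset.sum_ite_irrel, Finset.sum_ite_eq, Finset.sum_ite_eq', Finset.mem_univ,
    if_true]
  by_cases h : x.2.2.2 = y.2.2.2 <;> simp [h]

theorem embBbC_mul (M N : Matrix (B × b × C) (B × b × C) ℂ) :
    embBbC (M * N) = (embBbC M : Matrix (A × B × b × C) (A × B × b × C) ℂ) * embBbC N := by
  funext x y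
  simp only [embBbC, Matrix.mul_apply, Fintype.sum_prod_type, ite_mul, mul_ite, zero_mul,
    mul_zero, Finset.sum_ite_irrel, Finset.sum_ite_eq, Finset.sum_ite_eq', Finset.mem_univ,
    if_true]
  by_cases h : x.1 = y.1 <;> simp [h]

theorem trace_embABb (σ : Matrix (A × B × b × C) (A × B × b × C) ℂ)
    (M : Matrix (A × B × b) (A × B × b) ℂ) :
    (σ * embABb M).trace = (ptABb σ * M).trace := by
  simp only [Matrix.trace, Matrix.diag, Matrix.mul_apply, ptABb, embABb,
    Fintype.sum_prod_type, ite_mul, mul_ite, zero_mul, mul_zero, Finset.sum_ite_irrel,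
    Finset.sum_ite_eq, Finset.sum_ite_eq', Finset.mem_univ, if_true, Finset.sum_mul]
  refine Finset.sum_congr rfl fun _ _ => Finset.sum_congr rfl fun _ _ =>
    Finset.sum_congr rfl fun _ _ => ?_
  rw [Finset.sum_comm]
  refine Finset.sum_congr rfl fun _ _ => ?_
  rw [Finset.sum_comm]
  refine Finset.sum_congr rfl fun _ _ => ?_
  rw [Finset.sum_comm]

theorem trace_embBbC (σ : Matrix (A × B × b × C) (A × B × b × C) ℂ)
    (M : Matrix (B × b × C) (B × b × C) ℂ) :
    (σ * embBbC M).trace = (ptBbC σ * M).trace := by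
  simp only [Matrix.trace, Matrix.diag, Matrix.mul_apply, ptBbC, embBbC,
    Fintype.sum_prod_type, ite_mul, mul_ite, zero_mul, mul_zero, Finset.sum_ite_irrel,
    Finset.sum_const_zero, Finset.sum_ite_eq, Finset.sum_ite_eq', Finset.mem_univ, if_true,
    Finset.sum_mul]
  rw [Finset.sum_comm]
  refine Finset.sum_congr rfl fun _ _ => ?_
  rw [Finset.sum_comm]
  refine Finset.sum_congr rfl fun _ _ => ?_
  rw [Finset.sum_comm]
  refine Finset.sum_congr rfl fun _ _ => ?_
  rw [Finset.sum_comm]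
  refine Finset.sum_congr rfl fun _ _ => ?_
  rw [Finset.sum_comm]
  refine Finset.sum_congr rfl fun _ _ => ?_
  rw [Finset.sum_comm]

theorem ptABb_isHermitian {σ : Matrix (A × B × b × C) (A × B × b × C) ℂ}
    (hσ : σ.IsHermitian) : (ptABb σ).IsHermitian := by
  rw [Matrix.IsHermitian]
  funext p q
  simp only [Matrix.conjTranspose_apply, ptABb, star_sum]
  exact Finset.sum_congr rfl fun c _ => hσ.apply _ _

theorem ptBbC_isHermitian {σ : Matrix (A × B × b × C) (A × B × b × C) ℂ}
    (hσ : σ.IsHermitian) : (ptBbC σ).IsHermitian := by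
  rw [Matrix.IsHermitian]
  funext p q
  simp only [Matrix.conjTranspose_apply, ptBbC, star_sum]
  exact Finset.sum_congr rfl fun x _ => hσ.apply _ _

end Aux

/-- Deformation invariance of the modular commutator under
enlarging the middle region: let `σ` be a positive definite density matrix on
`H_A ⊗ H_B ⊗ H_b ⊗ H_C` satisfying the two quantum Markov identities
`K_{ABb}(σ) = K_{AB}(σ) + K_{Bb}(σ) − K_B(σ)` and
`K_{BbC}(σ) = K_{BC}(σ) + K_{Bb}(σ) − K_B(σ)` (with implicit identity
extensions). Then `J(A, Bb, C)_σ = J(A, B, C)_σ`, where in `J(A,Bb,C)` the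
middle subsystem is the union of the factors `B` and `b`. -/
theorem modular_commutator_deformation_middle_region
    (σ : Matrix (A × B × b × C) (A × B × b × C) ℂ)
    (hσ : σ.PosDef) (hTr : σ.trace = 1)
    (hMarkov₁ : embABb (-(mlog (ptABb σ))) =
      embAB (-(mlog (ptAB σ))) + embBb (-(mlog (ptBb σ))) -
        (embB (-(mlog (ptB σ))) : Matrix (A × B × b × C) (A × B × b × C) ℂ))
    (hMarkov₂ : embBbC (-(mlog (ptBbC σ))) =
      embBC (-(mlog (ptBC σ))) + embBb (-(mlog (ptBb σ))) -
        (embB (-(mlog (ptB σ))) : Matrix (A × B × b × C) (A × B × b × C) ℂ)) :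
    Complex.I * (σ * (embABb (-(mlog (ptABb σ))) * embBbC (-(mlog (ptBbC σ))) -
        embBbC (-(mlog (ptBbC σ))) * embABb (-(mlog (ptABb σ))))).trace =
    Complex.I * (σ * (embAB (-(mlog (ptAB σ))) * embBC (-(mlog (ptBC σ))) -
        embBC (-(mlog (ptBC σ))) * embAB (-(mlog (ptAB σ))))).trace := by
  set P : Matrix (A × B × b × C) (A × B × b × C) ℂ := embABb (-(mlog (ptABb σ))) with hPdef
  set Q : Matrix (A × B × b × C) (A × B × b × C) ℂ := embBbC (-(mlog (ptBbC σ))) with hQdef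
  set X : Matrix (A × B × b × C) (A × B × b × C) ℂ := embAB (-(mlog (ptAB σ))) with hXdef
  set Y : Matrix (A × B × b × C) (A × B × b × C) ℂ := embBb (-(mlog (ptBb σ))) with hYdef
  set Z : Matrix (A × B × b × C) (A × B × b × C) ℂ := embB (-(mlog (ptB σ))) with hZdef
  set W : Matrix (A × B × b × C) (A × B × b × C) ℂ := embBC (-(mlog (ptBC σ))) with hWdef
  have hP : P = X + (Y - Z) := by rw [hMarkov₁]; abel
  have hQ : Q = W + (Y - Z) := by rw [hMarkov₂]; abel
  have hkey : P * Q - Q * P =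
      (X * W - W * X) + (X * P - P * X) + (Q * W - W * Q) := by
    rw [hP, hQ]; noncomm_ring
  have hXP : (σ * (X * P - P * X)).trace = 0 := by
    have hherm := ptABb_isHermitian hσ.1
    have hc : ptABb σ * (-(mlog (ptABb σ))) = (-(mlog (ptABb σ))) * ptABb σ := by
      rw [Matrix.mul_neg, Matrix.neg_mul, mlog_comm _ hherm]
    rw [hXdef, hPdef, embAB_eq, ← embABb_mul, ← embABb_mul, ← embABb_sub, trace_embABb]
    exact trace_comm_zero _ _ _ hc
  have hQW : (σ * (Q * W - W * Q)).trace = 0 := by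
    have hherm := ptBbC_isHermitian hσ.1
    have hc : ptBbC σ * (-(mlog (ptBbC σ))) = (-(mlog (ptBbC σ))) * ptBbC σ := by
      rw [Matrix.mul_neg, Matrix.neg_mul, mlog_comm _ hherm]
    rw [hQdef, hWdef, embBC_eq, ← embBbC_mul, ← embBbC_mul, ← embBbC_sub, trace_embBbC]
    exact trace_comm_zero' _ _ _ hc
  rw [hkey, Matrix.mul_add, Matrix.mul_add, Matrix.trace_add, Matrix.trace_add, hXP, hQW,
    add_zero, add_zero]

end ModularCommutator
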